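/- arXiv:1809.00632 — 5 statements merged into one kernel-verified Lean document; each statement's English description precedes it below -/
import Mathlib

section
/- Let T be an n×n matrix that is a permutation matrix (permuting the standard basis v₁,…,vₙ). Let T₀ be the (n−1)×(n−1) top-left corner of T (i.e., T₀ = P₀ ∘ T restricted to the span of v₁,…,v_{n−1}, where P₀ is the orthogonal projection). Then there exists an (n−1)×(n−1) permutation matrix A₀ with ‖T₀ − A₀‖_F ≤ 1, where ‖·‖_F is the Frobenius norm. -/
/-!
Identify `Fin (n + 1)` with `Option (Fin n)`, the last index becoming `none`, and take for
`π` the permutation `Equiv.removeNone σ`: it agrees with `σ` at every `i` with `σ i ≠ none`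
and sends the one `i` with `σ i = none` to `σ none`. Hence the top-left corner of `σ` and the
permutation matrix of `π` differ in at most one row; there the corner row is zero and the row of
`π` has a single `1`, so the squared Frobenius norm of the difference is `0` or `1`.
-/

open Matrix Finset

noncomputable def frobNorm {m n : Type*} [Fintype m] [Fintype n]
    (M : Matrix m n ℂ) : ℝ :=
  Real.sqrt ((Matrix.trace (Mᴴ * M)).re)

lemma frobNorm_eq_sqrt_sum_normSq {m n : Type*} [Fintype m] [Fintype n] (M : Matrix m n ℂ) :
    frobNorm M = √(∑ i, ∑ j, Complex.normSq (M i j)) := by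
  rw [frobNorm, trace, Complex.re_sum, Finset.sum_comm]
  simp [mul_apply, Complex.normSq_apply, Complex.mul_re]

lemma Equiv.Perm.permMatrix_permCongr {m n R : Type*} [DecidableEq m] [DecidableEq n] [Zero R]
    [One R] (e : m ≃ n) (σ : Equiv.Perm m) :
    (e.permCongr σ).permMatrix R = (σ.permMatrix R).submatrix e.symm e.symm := by
  ext i j
  simp [Equiv.permCongr_apply, ← Equiv.eq_symm_apply]

section RemoveNone

variable {α : Type*} [Fintype α] [DecidableEq α] (σ : Equiv.Perm (Option α))

lemma sum_normSq_submatrix_some_sub_permMatrix_removeNone (i : α) :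
    ∑ j, Complex.normSq (((σ.permMatrix ℂ).submatrix some some
      - Equiv.Perm.permMatrix ℂ (Equiv.removeNone σ)) i j) =
      if σ (some i) = none then 1 else 0 := by
  rcases h : σ (some i) with _ | k
  · simp [h]
  · have hk : Equiv.removeNone σ i = k :=
      Option.some_injective _ ((Equiv.removeNone_some σ ⟨k, h⟩).trans h)
    simp [h, hk]

lemma frobNorm_submatrix_some_sub_permMatrix_removeNone_le_one :
    frobNorm ((σ.permMatrix ℂ).submatrix some some
      - Equiv.Perm.permMatrix ℂ (Equiv.removeNone σ)) ≤ 1 := by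
  rw [frobNorm_eq_sqrt_sum_normSq, Real.sqrt_le_one]
  simp only [sum_normSq_submatrix_some_sub_permMatrix_removeNone, Finset.sum_boole,
    Nat.cast_le_one]
  refine Finset.card_le_one.mpr fun i hi j hj => Option.some_injective _ (σ.injective ?_)
  exact (Finset.mem_filter.1 hi).2.trans (Finset.mem_filter.1 hj).2.symm

end RemoveNone

/-- If `T` is an `(n+1)×(n+1)` permutation matrix and `T₀` its top-left `n×n`
corner, then there is an `n×n` permutation matrix `A₀` with `‖T₀ − A₀‖_F ≤ 1`. -/
theorem stmt1 (n : ℕ) (σ : Equiv.Perm (Fin (n + 1))) :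
    ∃ π : Equiv.Perm (Fin n),
      frobNorm ((σ.permMatrix ℂ).submatrix Fin.castSucc Fin.castSucc - π.permMatrix ℂ) ≤ 1 := by
  have h := frobNorm_submatrix_some_sub_permMatrix_removeNone_le_one
    (finSuccEquivLast.permCongr σ)
  have hcast : (finSuccEquivLast.symm ∘ some : Fin n → Fin (n + 1)) = Fin.castSucc :=
    funext finSuccEquivLast_symm_some
  rw [Equiv.Perm.permMatrix_permCongr, submatrix_submatrix, hcast] at h
  exact ⟨_, h⟩
end

section
/- Let T be an n×n unitary matrix and let T₀ be its (n−1)×(n−1) top-left corner. Then there exists an (n−1)×(n−1) unitary matrix A₀ with ‖T₀ − A₀‖_F ≤ 1 in the Frobenius norm. -/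
/-!
Write `T = [[T₀, c], [r, t]]`. Orthonormality of the columns and rows of `T` gives
`T₀ᴴ T₀ = 1 - rᴴ r`, `T₀ᴴ c = -t rᴴ` and `‖c‖² = ‖r‖² = 1 - |t|²`. Hence `T₀` has singular values
`1, …, 1, |t|`, and a rank-one correction along `c r` repairs the defect: with `u t = |t|`, `|u| = 1`,
the matrix `A₀ = T₀ - u / (1 + |t|) • c r` is unitary, and `‖T₀ - A₀‖_F = ‖c‖ ‖r‖ / (1 + |t|) = 1 - |t|`.
-/

open Matrix

theorem Complex.exists_norm_eq_one_mul_eq_norm (t : ℂ) : ∃ u : ℂ, ‖u‖ = 1 ∧ u * t = ‖t‖ := by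
  refine ⟨exp (-arg t * I), by simpa using norm_exp_ofReal_mul_I (-arg t), ?_⟩
  conv_lhs => rw [← norm_mul_exp_arg_mul_I t]
  rw [mul_left_comm, ← exp_add]
  simp

theorem frobNorm_smul_vecMulVec {m n : Type*} [Fintype m] [Fintype n] (β : ℂ) (c : m → ℂ)
    (r : n → ℂ) :
    frobNorm (β • vecMulVec c r) = √((star β * β * (star c ⬝ᵥ c) * (star r ⬝ᵥ r)).re) := by
  rw [frobNorm, conjTranspose_smul, conjTranspose_vecMulVec, Matrix.smul_mul, Matrix.mul_smul,
    smul_smul, vecMulVec_mul_vecMulVec, trace_smul, trace_vecMulVec, dotProduct_smul]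
  simp only [smul_eq_mul, mul_assoc]

section RankOneCorrection

variable {ι : Type*} [Fintype ι] [DecidableEq ι] {T₀ : Matrix ι ι ℂ} {c r : ι → ℂ} {t : ℂ}

theorem conjTranspose_mul_self_sub_smul_vecMulVec
    (h₀₀ : T₀ᴴ * T₀ = 1 - vecMulVec (star r) r) (h₀₁ : T₀ᴴ *ᵥ c = -(t • star r))
    (hc : star c ⬝ᵥ c = 1 - ‖t‖ ^ 2) (β : ℂ) :
    (T₀ - β • vecMulVec c r)ᴴ * (T₀ - β • vecMulVec c r) =
      1 + (β * t + star (β * t) + star β * β * (1 - ‖t‖ ^ 2) - 1) • vecMulVec (star r) r := by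
  have hV : T₀ᴴ * vecMulVec c r = -t • vecMulVec (star r) r := by
    rw [mul_vecMulVec, h₀₁, ← smul_vecMulVec, neg_smul, neg_vecMulVec]
  have hV' : (vecMulVec c r)ᴴ * T₀ = -star t • vecMulVec (star r) r := by
    rw [conjTranspose_vecMulVec, vecMulVec_mul, ← conjTranspose_conjTranspose T₀, ← star_mulVec,
      h₀₁, star_neg, star_smul, star_star, vecMulVec_neg, vecMulVec_smul, neg_smul]
  simp only [conjTranspose_sub, conjTranspose_smul, sub_mul, mul_sub, Matrix.smul_mul,
    Matrix.mul_smul, smul_smul, h₀₀, hV, hV']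
  rw [conjTranspose_vecMulVec, vecMulVec_mul_vecMulVec, hc, vecMulVec_smul, star_mul']
  module

theorem exists_mem_unitaryGroup_frobNorm_sub_eq
    (h₀₀ : T₀ᴴ * T₀ = 1 - vecMulVec (star r) r) (h₀₁ : T₀ᴴ *ᵥ c = -(t • star r))
    (hc : star c ⬝ᵥ c = 1 - ‖t‖ ^ 2) (hr : star r ⬝ᵥ r = 1 - ‖t‖ ^ 2) (ht : ‖t‖ ≤ 1) :
    ∃ A₀ ∈ unitaryGroup ι ℂ, frobNorm (T₀ - A₀) = 1 - ‖t‖ := by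
  obtain ⟨u, hu, hut⟩ := Complex.exists_norm_eq_one_mul_eq_norm t
  set β : ℂ := u / (1 + ‖t‖)
  have hβt : β * t = ‖t‖ / (1 + ‖t‖) := by rw [div_mul_eq_mul_div, hut]
  have hββ : star β * β = 1 / (1 + ‖t‖) ^ 2 := by
    rw [Complex.star_def, Complex.conj_mul', norm_div, hu]
    norm_cast
    rw [Real.norm_of_nonneg (by positivity), _root_.one_div_pow]
  have hκ : β * t + star (β * t) + star β * β * (1 - ‖t‖ ^ 2) - 1 = 0 := by
    rw [hβt, hββ]
    norm_cast
    rw [Complex.star_def, Complex.conj_ofReal]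
    norm_cast
    field_simp
    ring
  refine ⟨T₀ - β • vecMulVec c r, ?_, ?_⟩
  · rw [mem_unitaryGroup_iff', star_eq_conjTranspose,
      conjTranspose_mul_self_sub_smul_vecMulVec h₀₀ h₀₁ hc, hκ, zero_smul, add_zero]
  · rw [sub_sub_cancel, frobNorm_smul_vecMulVec, hββ, hc, hr,
      ← Real.sqrt_sq (sub_nonneg.mpr ht)]
    norm_cast
    congr 1
    field_simp
    ring

end RankOneCorrection

section Blocks

variable {α : Type*} {n : ℕ}

def bottomRow (T : Matrix (Fin (n + 1)) (Fin (n + 1)) α) : Fin n → α :=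
  fun j => T (Fin.last n) j.castSucc

def rightCol (T : Matrix (Fin (n + 1)) (Fin (n + 1)) α) : Fin n → α :=
  fun i => T i.castSucc (Fin.last n)

variable {T : Matrix (Fin (n + 1)) (Fin (n + 1)) ℂ}

theorem conjTranspose_corner_mul_corner (hT : T ∈ unitaryGroup (Fin (n + 1)) ℂ) :
    (T.submatrix Fin.castSucc Fin.castSucc)ᴴ * T.submatrix Fin.castSucc Fin.castSucc =
      1 - vecMulVec (star (bottomRow T)) (bottomRow T) := by
  ext j k
  have h := congrFun₂ (mem_unitaryGroup_iff'.mp hT) j.castSucc k.castSucc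
  rw [mul_apply, Fin.sum_univ_castSucc, one_apply] at h
  simp only [Fin.castSucc_inj] at h
  rw [Matrix.sub_apply, one_apply, ← h]
  simp [mul_apply, bottomRow, vecMulVec_apply]

theorem conjTranspose_corner_mulVec_rightCol (hT : T ∈ unitaryGroup (Fin (n + 1)) ℂ) :
    (T.submatrix Fin.castSucc Fin.castSucc)ᴴ *ᵥ rightCol T =
      -(T (Fin.last n) (Fin.last n) • star (bottomRow T)) := by
  ext j
  have h := congrFun₂ (mem_unitaryGroup_iff'.mp hT) j.castSucc (Fin.last n)
  rw [mul_apply, Fin.sum_univ_castSucc, one_apply_ne (Fin.castSucc_lt_last j).ne] at h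
  simp only [star_apply] at h
  simp only [mulVec, dotProduct, Pi.neg_apply, Pi.smul_apply, Pi.star_apply, smul_eq_mul,
    conjTranspose_apply, submatrix_apply, rightCol, bottomRow]
  linear_combination h

theorem star_rightCol_dotProduct_self (hT : T ∈ unitaryGroup (Fin (n + 1)) ℂ) :
    star (rightCol T) ⬝ᵥ rightCol T = 1 - ‖T (Fin.last n) (Fin.last n)‖ ^ 2 := by
  have h := congrFun₂ (mem_unitaryGroup_iff'.mp hT) (Fin.last n) (Fin.last n)
  rw [mul_apply, Fin.sum_univ_castSucc, one_apply_eq, star_apply, Complex.star_def,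
    Complex.conj_mul'] at h
  rw [← h]
  simp [dotProduct, rightCol]

theorem star_bottomRow_dotProduct_self (hT : T ∈ unitaryGroup (Fin (n + 1)) ℂ) :
    star (bottomRow T) ⬝ᵥ bottomRow T = 1 - ‖T (Fin.last n) (Fin.last n)‖ ^ 2 := by
  have h := congrFun₂ (mem_unitaryGroup_iff.mp hT) (Fin.last n) (Fin.last n)
  rw [mul_apply, Fin.sum_univ_castSucc, one_apply_eq, star_apply, Complex.star_def,
    Complex.mul_conj'] at h
  rw [← h]
  simp [dotProduct, bottomRow, mul_comm]

end Blocks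

/-- If `T` is an `(n+1)×(n+1)` unitary matrix and `T₀` its top-left `n×n`
corner, then there is an `n×n` unitary matrix `A₀` with `‖T₀ − A₀‖_F ≤ 1`. -/
theorem stmt2 (n : ℕ) (T : Matrix (Fin (n + 1)) (Fin (n + 1)) ℂ)
    (hT : T ∈ Matrix.unitaryGroup (Fin (n + 1)) ℂ) :
    ∃ A₀ : Matrix (Fin n) (Fin n) ℂ, A₀ ∈ Matrix.unitaryGroup (Fin n) ℂ ∧
      frobNorm (T.submatrix Fin.castSucc Fin.castSucc - A₀) ≤ 1 := by
  obtain ⟨A₀, hA₀, hdist⟩ := exists_mem_unitaryGroup_frobNorm_sub_eq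
    (conjTranspose_corner_mul_corner hT) (conjTranspose_corner_mulVec_rightCol hT)
    (star_rightCol_dotProduct_self hT) (star_bottomRow_dotProduct_self hT)
    (entry_norm_bound_of_unitary hT _ _)
  exact ⟨A₀, hA₀, hdist.trans_le (sub_le_self _ (norm_nonneg _))⟩
end

section
/- Let T be an n×n unitary matrix, let u be the bottom row of T with its rightmost entry removed (a 1×(n−1) row vector), and let T₀ be the (n−1)×(n−1) top-left corner of T. Then T₀*T₀ = I_{n−1} − u*u, and the eigenvalues of sqrt(T₀*T₀) are 1 with multiplicity n−2 and sqrt(1 − ‖u‖²) with multiplicity 1; consequently ‖sqrt(T₀*T₀) − I‖_F = |sqrt(1 − ‖u‖²) − 1| ≤ 1. -/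
open Matrix Finset Polynomial
open scoped ComplexOrder

noncomputable def Matrix.PosSemidef.sqrt {n : Type*} [Fintype n] [DecidableEq n]
    {𝕜 : Type*} [RCLike 𝕜] {A : Matrix n n 𝕜} (hA : A.PosSemidef) : Matrix n n 𝕜 :=
  hA.1.eigenvectorUnitary.1 * diagonal ((↑) ∘ (√·) ∘ hA.1.eigenvalues) *
  (star hA.1.eigenvectorUnitary : Matrix n n 𝕜)

/-!
Write `M = uᴴu = vecMulVec (star v) v` with `v = u 0`, so that `M² = s M` with `s = ‖v‖²`.
Orthonormality of the first `n + 1` columns of `T` gives `T₀ᴴT₀ = 1 - M`, and testing this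
positive semidefinite matrix against `star v` gives `s - s² ≥ 0`, i.e. `s ≤ 1`. With `r = √(1 - s)`
we have `(1 - r)(1 + r) = s`, hence `S = 1 - (1 + r)⁻¹ M` satisfies `S² = 1 - M`; it is also
positive semidefinite, being the convex combination `(1 - a) 1 + a (1 - M)`, `a = (1 + r)⁻¹`.
So `S` is the square root. It is a rank-one perturbation of the identity, which gives its
characteristic polynomial, and `S - 1 = -(1 + r)⁻¹ M` has Frobenius norm `(1 + r)⁻¹ s = 1 - r`.
-/

theorem Real.inv_one_add_sqrt_one_sub_mul {s : ℝ} (hs : s ≤ 1) :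
    (1 + √(1 - s))⁻¹ * s = 1 - √(1 - s) := by
  have hr : √(1 - s) ^ 2 = 1 - s := Real.sq_sqrt (by linarith)
  have hr0 : 0 ≤ √(1 - s) := Real.sqrt_nonneg _
  field_simp
  linear_combination hr

namespace Matrix

theorem conjTranspose_mul_self_submatrix_castSucc {α n : Type*} [Ring α] [StarRing α]
    [Fintype n] {k : ℕ} (A : Matrix (Fin (k + 1)) n α) :
    (A.submatrix Fin.castSucc id)ᴴ * A.submatrix Fin.castSucc id =
      Aᴴ * A - vecMulVec (star (A (Fin.last k))) (A (Fin.last k)) := by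
  ext i j
  simp [mul_apply, Fin.sum_univ_castSucc, vecMulVec_apply]

theorem conjTranspose_mul_self_corner_of_mem_unitaryGroup {α : Type*} [CommRing α]
    [StarRing α] {k : ℕ} {T : Matrix (Fin (k + 1)) (Fin (k + 1)) α}
    (hT : T ∈ unitaryGroup (Fin (k + 1)) α) :
    (T.submatrix Fin.castSucc Fin.castSucc)ᴴ * T.submatrix Fin.castSucc Fin.castSucc =
      1 - vecMulVec (star fun j => T (Fin.last k) j.castSucc)
        fun j => T (Fin.last k) j.castSucc := by
  have hcols : (T.submatrix id Fin.castSucc)ᴴ * T.submatrix id Fin.castSucc = 1 := by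
    rw [conjTranspose_submatrix, ← submatrix_mul _ _ _ _ _ Function.bijective_id,
      ← star_eq_conjTranspose, mem_unitaryGroup_iff'.mp hT,
      submatrix_one _ (Fin.castSucc_injective _)]
  have h := conjTranspose_mul_self_submatrix_castSucc (T.submatrix id Fin.castSucc)
  rw [hcols] at h
  exact h

theorem charpoly_one_add_vecMulVec {R m : Type*} [CommRing R] [Fintype m] [DecidableEq m]
    [Nonempty m] (u w : m → R) :
    (1 + vecMulVec u w).charpoly = (X - 1) ^ (Fintype.card m - 1) * (X - C (1 + u ⬝ᵥ w)) := by
  have h : 1 + vecMulVec u w = vecMulVec u w - scalar m (-1 : R) := by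
    rw [map_neg, sub_neg_eq_add, scalar_apply, diagonal_one, add_comm]
  obtain ⟨k, hk⟩ : ∃ k, Fintype.card m = k + 1 := Nat.exists_eq_add_one.mpr Fintype.card_pos
  rw [h, charpoly_sub_scalar, charpoly_vecMulVec, hk, Nat.add_sub_cancel]
  simp only [sub_comp, smul_eq_C_mul, mul_comp, C_comp, pow_comp, X_comp, map_neg, map_one,
    map_add]
  ring

variable {𝕜 m : Type*} [RCLike 𝕜]

theorem PosSemidef.one_sub_smul [DecidableEq m] {A : Matrix m m 𝕜} (hA : (1 - A).PosSemidef)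
    {a : ℝ} (ha0 : 0 ≤ a) (ha1 : a ≤ 1) : (1 - (a : 𝕜) • A).PosSemidef := by
  have h : 1 - (a : 𝕜) • A = ((1 - a : ℝ) : 𝕜) • 1 + (a : 𝕜) • (1 - A) := by
    rw [RCLike.ofReal_sub, RCLike.ofReal_one]; module
  rw [h]
  exact (PosSemidef.one.smul (RCLike.ofReal_nonneg.2 (by linarith))).add
    (hA.smul (RCLike.ofReal_nonneg.2 ha0))

variable [Fintype m]

theorem star_dotProduct_self_eq_ofReal_re (v : m → 𝕜) :
    star v ⬝ᵥ v = (RCLike.re (star v ⬝ᵥ v) : 𝕜) := by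
  obtain ⟨x, -, hx⟩ := RCLike.nonneg_iff_exists_ofReal.1 (dotProduct_star_self_nonneg v)
  rw [← hx, RCLike.ofReal_re]

theorem nonneg_of_star_dotProduct_self_eq {v : m → 𝕜} {s : ℝ} (hs : star v ⬝ᵥ v = s) :
    0 ≤ s := by
  exact_mod_cast hs ▸ dotProduct_star_self_nonneg v

theorem vecMulVec_star_self_mul_self (v : m → 𝕜) :
    vecMulVec (star v) v * vecMulVec (star v) v = (star v ⬝ᵥ v) • vecMulVec (star v) v := by
  rw [vecMulVec_mul_vecMulVec, vecMulVec_smul, dotProduct_comm]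

variable [DecidableEq m]

section
open scoped MatrixOrder

theorem PosSemidef.eq_sqrt_of_sq_eq {A B : Matrix m m 𝕜} (hA : A.PosSemidef)
    (hB : B.PosSemidef) (hAB : A ^ 2 = B) : A = hB.sqrt := by
  have h1 : CFC.sqrt B = A := CFC.sqrt_unique (by rw [← hAB, sq]) hA.nonneg
  rw [← h1, CFC.sqrt_eq_cfc, cfc_nnreal_eq_real _ B, hB.1.cfc_eq, IsHermitian.cfc,
    PosSemidef.sqrt, Unitary.conjStarAlgAut_apply]
  congr 3
  funext i
  simp [Real.coe_sqrt, hB.eigenvalues_nonneg i]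

end

theorem le_one_of_posSemidef_one_sub_vecMulVec {v : m → 𝕜} {s : ℝ} (hs : star v ⬝ᵥ v = s)
    (h : (1 - vecMulVec (star v) v).PosSemidef) : s ≤ 1 := by
  have hvv : v ⬝ᵥ star v = s := by rw [dotProduct_comm, hs]
  have hq := h.dotProduct_mulVec_nonneg (star v)
  rw [star_star, sub_mulVec, one_mulVec, vecMulVec_mulVec, dotProduct_sub, hvv, op_smul_eq_smul,
    dotProduct_smul, hvv, smul_eq_mul] at hq
  have : 0 ≤ s - s * s := by exact_mod_cast hq
  nlinarith

theorem sq_one_sub_smul_vecMulVec {v : m → 𝕜} {s r : ℝ} (hs : star v ⬝ᵥ v = s)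
    (hr : r ^ 2 = 1 - s) (hr0 : 0 ≤ r) :
    (1 - (((1 + r)⁻¹ : ℝ) : 𝕜) • vecMulVec (star v) v) ^ 2 = 1 - vecMulVec (star v) v := by
  have key : (2 * (1 + r)⁻¹ - (1 + r)⁻¹ ^ 2 * s : ℝ) = 1 := by
    field_simp; linear_combination -hr
  have keyC : (2 * (((1 + r)⁻¹ : ℝ) : 𝕜) - (((1 + r)⁻¹ : ℝ) : 𝕜) ^ 2 * s) = 1 := by
    exact_mod_cast key
  rw [sq, sub_mul, mul_sub, mul_sub, mul_one, one_mul, mul_one, smul_mul_smul,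
    vecMulVec_star_self_mul_self, hs, smul_smul]
  linear_combination (norm := module) -keyC • vecMulVec (star v) v

section
variable {A : Matrix m m 𝕜} (hA : A.PosSemidef) {v : m → 𝕜} {s : ℝ}
  (hAv : A = 1 - vecMulVec (star v) v) (hs : star v ⬝ᵥ v = s)
include hAv hs

theorem PosSemidef.sqrt_eq_one_sub_smul_vecMulVec :
    hA.sqrt = 1 - (((1 + √(1 - s))⁻¹ : ℝ) : 𝕜) • vecMulVec (star v) v := by
  have hs1 : s ≤ 1 := le_one_of_posSemidef_one_sub_vecMulVec hs (hAv ▸ hA)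
  have hr0 : 0 ≤ √(1 - s) := Real.sqrt_nonneg _
  refine (PosSemidef.eq_sqrt_of_sq_eq ?_ hA ?_).symm
  · exact (hAv ▸ hA).one_sub_smul (by positivity) (inv_le_one_of_one_le₀ (by linarith))
  · rw [hAv]; exact sq_one_sub_smul_vecMulVec hs (Real.sq_sqrt (by linarith)) hr0

theorem PosSemidef.charpoly_sqrt_of_eq_one_sub_vecMulVec [Nonempty m] :
    hA.sqrt.charpoly = (X - 1) ^ (Fintype.card m - 1) * (X - C (√(1 - s) : 𝕜)) := by
  have ha : (1 + √(1 - s))⁻¹ * s = 1 - √(1 - s) :=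
    Real.inv_one_add_sqrt_one_sub_mul (le_one_of_posSemidef_one_sub_vecMulVec hs (hAv ▸ hA))
  have haK : (((1 + √(1 - s))⁻¹ : ℝ) : 𝕜) * s = 1 - √(1 - s) := by exact_mod_cast ha
  rw [hA.sqrt_eq_one_sub_smul_vecMulVec hAv hs, sub_eq_add_neg, ← neg_smul, ← smul_vecMulVec,
    charpoly_one_add_vecMulVec, smul_dotProduct, hs, smul_eq_mul]
  congr
  linear_combination -haK

end

end Matrix

theorem frobNorm_smul_vecMulVec_star_self {m : Type*} [Fintype m] {v : m → ℂ} {s : ℝ}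
    (hs : star v ⬝ᵥ v = s) (c : ℂ) :
    frobNorm (c • vecMulVec (star v) v) = ‖c‖ * s := by
  have htr : ((c • vecMulVec (star v) v)ᴴ * (c • vecMulVec (star v) v)).trace =
      ((‖c‖ * s) ^ 2 : ℝ) := by
    rw [conjTranspose_smul, conjTranspose_vecMulVec, star_star, smul_mul_smul,
      vecMulVec_star_self_mul_self, trace_smul, trace_smul, trace_vecMulVec, hs, smul_eq_mul,
      smul_eq_mul, Complex.star_def, Complex.conj_mul']
    push_cast; ring
  have hs0 := nonneg_of_star_dotProduct_self_eq hs
  rw [frobNorm, htr, Complex.ofReal_re, Real.sqrt_sq (by positivity)]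

theorem Matrix.PosSemidef.frobNorm_sqrt_sub_one_of_eq_one_sub_vecMulVec {m : Type*} [Fintype m]
    [DecidableEq m] {A : Matrix m m ℂ} (hA : A.PosSemidef) {v : m → ℂ} {s : ℝ}
    (hAv : A = 1 - vecMulVec (star v) v) (hs : star v ⬝ᵥ v = s) :
    frobNorm (hA.sqrt - 1) = 1 - √(1 - s) := by
  rw [hA.sqrt_eq_one_sub_smul_vecMulVec hAv hs, sub_sub_cancel_left, ← neg_smul,
    frobNorm_smul_vecMulVec_star_self hs, norm_neg, RCLike.norm_ofReal,
    abs_of_nonneg (by positivity),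
    Real.inv_one_add_sqrt_one_sub_mul (le_one_of_posSemidef_one_sub_vecMulVec hs (hAv ▸ hA))]

/-- Let `T` be an `(n+2)×(n+2)` unitary matrix, `u` its bottom row with the last
entry removed, and `T₀` its top-left `(n+1)×(n+1)` corner.  Then
`T₀ᴴT₀ = I − uᴴu`; the eigenvalues of `√(T₀ᴴT₀)` are `1` with multiplicity `n`
and `√(1 − ‖u‖²)` with multiplicity `1` (expressed via the characteristic
polynomial); and `‖√(T₀ᴴT₀) − I‖_F = |√(1 − ‖u‖²) − 1| ≤ 1`. -/
theorem stmt3 (n : ℕ) (T : Matrix (Fin (n + 2)) (Fin (n + 2)) ℂ)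
    (hT : T ∈ Matrix.unitaryGroup (Fin (n + 2)) ℂ)
    (T₀ : Matrix (Fin (n + 1)) (Fin (n + 1)) ℂ)
    (hT₀ : T₀ = T.submatrix Fin.castSucc Fin.castSucc)
    (u : Matrix (Fin 1) (Fin (n + 1)) ℂ)
    (hu : u = fun _ j => T (Fin.last (n + 1)) j.castSucc)
    (hPSD : (T₀ᴴ * T₀).PosSemidef) :
    T₀ᴴ * T₀ = 1 - uᴴ * u ∧
    (hPSD.sqrt).charpoly =
      (X - C 1) ^ n *
        (X - C ((Real.sqrt (1 - ((Matrix.trace (uᴴ * u)).re)) : ℝ) : ℂ)) ∧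
    frobNorm (hPSD.sqrt - 1) =
      |Real.sqrt (1 - ((Matrix.trace (uᴴ * u)).re)) - 1| ∧
    frobNorm (hPSD.sqrt - 1) ≤ 1 := by
  set v : Fin (n + 1) → ℂ := fun j => T (Fin.last (n + 1)) j.castSucc
  have huv : uᴴ * u = vecMulVec (star v) v := by
    rw [hu, vecMulVec_eq (Fin 1), ← conjTranspose_replicateRow]; rfl
  have hgram : T₀ᴴ * T₀ = 1 - vecMulVec (star v) v :=
    hT₀ ▸ conjTranspose_mul_self_corner_of_mem_unitaryGroup hT
  have hs : star v ⬝ᵥ v = ((trace (uᴴ * u)).re : ℂ) := by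
    rw [huv, trace_vecMulVec]; exact star_dotProduct_self_eq_ofReal_re v
  have hfrob := hPSD.frobNorm_sqrt_sub_one_of_eq_one_sub_vecMulVec hgram hs
  have hr1 : √(1 - (trace (uᴴ * u)).re) ≤ 1 :=
    Real.sqrt_le_one.mpr (by linarith [nonneg_of_star_dotProduct_self_eq hs])
  refine ⟨huv ▸ hgram, ?_, ?_, ?_⟩
  · simpa [RCLike.ofReal_eq_complex_ofReal] using
      hPSD.charpoly_sqrt_of_eq_one_sub_vecMulVec hgram hs
  · rw [hfrob, abs_of_nonpos (by linarith), neg_sub]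
  · linarith [Real.sqrt_nonneg (1 - (trace (uᴴ * u)).re)]
end

section
/- Let T be an n×n unitary matrix, let f: ℂ^{n−1} → ℂⁿ be the inclusion onto the first n−1 coordinates, and let A₀ be an (n−1)×(n−1) unitary matrix such that ‖T₀ − A₀‖_F ≤ 1, where T₀ is the top-left (n−1)×(n−1) corner of T. Then ‖T^{−1} ∘ f ∘ A₀ − f‖_F ≤ 2. -/
open Matrix Finset

/-! The matrix `T⁻¹ f A₀ - f` equals `Tᴴ (f A₀ - T f)`, and multiplying by the isometry `Tᴴ`
does not change the Frobenius norm. The first `n` rows of `f A₀ - T f` form `A₀ - T₀`, of squared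
norm at most `1`; its last row is minus the last row of `T` with the final entry dropped, of squared
norm at most `1` because the rows of a unitary matrix are unit vectors. Hence the norm is at most
`√2 ≤ 2`. -/

section FrobNorm

variable {l m k : Type*} [Fintype l] [Fintype m] [Fintype k]

lemma re_trace_conjTranspose_mul_self (M : Matrix m k ℂ) :
    (Mᴴ * M).trace.re = ∑ i, ∑ j, Complex.normSq (M i j) := by
  simp only [Matrix.trace, Matrix.diag_apply, Matrix.mul_apply, Matrix.conjTranspose_apply,
    Complex.re_sum]
  rw [Finset.sum_comm]
  refine Finset.sum_congr rfl fun i _ => Finset.sum_congr rfl fun j _ => ?_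
  simp [Complex.normSq_apply, Complex.mul_re]

lemma frobNorm_nonneg (M : Matrix m k ℂ) : 0 ≤ frobNorm M :=
  Real.sqrt_nonneg _

lemma frobNorm_sq (M : Matrix m k ℂ) :
    frobNorm M ^ 2 = ∑ i, ∑ j, Complex.normSq (M i j) := by
  rw [frobNorm, re_trace_conjTranspose_mul_self, Real.sq_sqrt]
  exact Finset.sum_nonneg fun i _ => Finset.sum_nonneg fun j _ => Complex.normSq_nonneg _

lemma frobNorm_sub_comm (A B : Matrix m k ℂ) : frobNorm (A - B) = frobNorm (B - A) := by
  rw [frobNorm, frobNorm, ← neg_sub B A, conjTranspose_neg, Matrix.neg_mul, Matrix.mul_neg, neg_neg]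

lemma frobNorm_mul_of_conjTranspose_mul_self [DecidableEq m] {U : Matrix l m ℂ} (hU : Uᴴ * U = 1)
    (M : Matrix m k ℂ) : frobNorm (U * M) = frobNorm M := by
  rw [frobNorm, frobNorm, conjTranspose_mul, Matrix.mul_assoc, ← Matrix.mul_assoc Uᴴ, hU,
    Matrix.one_mul]

end FrobNorm

lemma frobNorm_sq_eq_castSucc_add_last {n : ℕ} {k : Type*} [Fintype k]
    (M : Matrix (Fin (n + 1)) k ℂ) :
    frobNorm M ^ 2 =
      frobNorm (M.submatrix Fin.castSucc id) ^ 2 + ∑ j, Complex.normSq (M (Fin.last n) j) := by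
  rw [frobNorm_sq, frobNorm_sq, Fin.sum_univ_castSucc]
  rfl

lemma sum_normSq_row_of_mem_unitaryGroup {m : Type*} [Fintype m] [DecidableEq m]
    {U : Matrix m m ℂ} (hU : U ∈ unitaryGroup m ℂ) (i : m) :
    ∑ j, Complex.normSq (U i j) = 1 := by
  have hii := congr_fun₂ (mem_unitaryGroup_iff.mp hU) i i
  simp only [star_eq_conjTranspose, Matrix.mul_apply, conjTranspose_apply, one_apply_eq,
    Complex.star_def, Complex.mul_conj] at hii
  exact_mod_cast hii

section Inclusion

variable {n : ℕ}

def finCastSuccInclusion (n : ℕ) : Matrix (Fin (n + 1)) (Fin n) ℂ :=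
  fun i j => if i = j.castSucc then 1 else 0

lemma mul_finCastSuccInclusion_apply {m : Type*} (M : Matrix m (Fin (n + 1)) ℂ) (i : m)
    (j : Fin n) : (M * finCastSuccInclusion n) i j = M i j.castSucc := by
  simp [finCastSuccInclusion, Matrix.mul_apply]

lemma finCastSuccInclusion_mul_apply_castSucc {k : Type*} (A : Matrix (Fin n) k ℂ) (i : Fin n)
    (j : k) : (finCastSuccInclusion n * A) i.castSucc j = A i j := by
  simp [finCastSuccInclusion, Matrix.mul_apply, Fin.castSucc_inj]

lemma finCastSuccInclusion_mul_apply_last {k : Type*} (A : Matrix (Fin n) k ℂ) (j : k) :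
    (finCastSuccInclusion n * A) (Fin.last n) j = 0 := by
  simp [finCastSuccInclusion, Matrix.mul_apply, (Fin.castSucc_lt_last _).ne']

end Inclusion

theorem stmt4_general (n : ℕ) (T : Matrix (Fin (n + 1)) (Fin (n + 1)) ℂ)
    (hT : T ∈ Matrix.unitaryGroup (Fin (n + 1)) ℂ)
    (A₀ : Matrix (Fin n) (Fin n) ℂ)
    (f : Matrix (Fin (n + 1)) (Fin n) ℂ)
    (hf : f = fun i j => if i = j.castSucc then 1 else 0)
    (hclose : frobNorm (T.submatrix Fin.castSucc Fin.castSucc - A₀) ≤ 1) :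
    frobNorm (T⁻¹ * f * A₀ - f) ≤ 2 := by
  have hf : f = finCastSuccInclusion n := hf
  subst hf
  set ι := finCastSuccInclusion n
  have hTT : Tᴴ * T = 1 := by simpa [star_eq_conjTranspose] using hT.1
  have hTinv : T⁻¹ = Tᴴ := inv_eq_left_inv hTT
  have hTTadj : (Tᴴ)ᴴ * Tᴴ = 1 := by simpa [star_eq_conjTranspose] using hT.2
  have hfactor : T⁻¹ * ι * A₀ - ι = Tᴴ * (ι * A₀ - T * ι) := by
    rw [hTinv, Matrix.mul_sub, ← Matrix.mul_assoc, ← Matrix.mul_assoc, hTT, Matrix.one_mul]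
  have htop : (ι * A₀ - T * ι).submatrix Fin.castSucc id =
      A₀ - T.submatrix Fin.castSucc Fin.castSucc := by
    ext i j
    simp [ι, finCastSuccInclusion_mul_apply_castSucc, mul_finCastSuccInclusion_apply]
  have hlast : ∑ j, Complex.normSq ((ι * A₀ - T * ι) (Fin.last n) j) ≤ 1 := by
    simp only [Matrix.sub_apply, ι, finCastSuccInclusion_mul_apply_last,
      mul_finCastSuccInclusion_apply, zero_sub, Complex.normSq_neg]
    rw [← sum_normSq_row_of_mem_unitaryGroup hT (Fin.last n),
      Fin.sum_univ_castSucc (fun j => Complex.normSq (T (Fin.last n) j))]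
    exact le_add_of_nonneg_right (Complex.normSq_nonneg _)
  have hsq : frobNorm (ι * A₀ - T * ι) ^ 2 ≤ 2 := by
    rw [frobNorm_sq_eq_castSucc_add_last, htop, frobNorm_sub_comm]
    nlinarith [frobNorm_nonneg (T.submatrix Fin.castSucc Fin.castSucc - A₀)]
  rw [hfactor, frobNorm_mul_of_conjTranspose_mul_self hTTadj]
  nlinarith [frobNorm_nonneg (ι * A₀ - T * ι)]

/-- If `T` is an `(n+1)×(n+1)` unitary matrix, `f` is the inclusion of `ℂⁿ`
onto the first `n` coordinates, and `A₀` is an `n×n` unitary matrix with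
`‖T₀ − A₀‖_F ≤ 1` (where `T₀` is the top-left corner of `T`), then
`‖T⁻¹ ∘ f ∘ A₀ − f‖_F ≤ 2`. -/
theorem stmt4 (n : ℕ) (T : Matrix (Fin (n + 1)) (Fin (n + 1)) ℂ)
    (hT : T ∈ Matrix.unitaryGroup (Fin (n + 1)) ℂ)
    (A₀ : Matrix (Fin n) (Fin n) ℂ) (hA₀ : A₀ ∈ Matrix.unitaryGroup (Fin n) ℂ)
    (f : Matrix (Fin (n + 1)) (Fin n) ℂ)
    (hf : f = fun i j => if i = j.castSucc then 1 else 0)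
    (hclose : frobNorm (T.submatrix Fin.castSucc Fin.castSucc - A₀) ≤ 1) :
    frobNorm (T⁻¹ * f * A₀ - f) ≤ 2 :=
  stmt4_general n T hT A₀ f hf hclose
end

section
/- Let Γ be a group with Kazhdan's Property (T) with Kazhdan constant κ > 0 for generating set S, let (H₁, α) and (H₂, β) be finite-dimensional unitary representations of Γ, let ε > 0, and let f : H₁ → H₂ be a nonzero linear map such that ‖α(s^{−1}) ∘ f ∘ β(s) − f‖ < ε·‖f‖ for each s ∈ S. Then there is a morphism of Γ-representations h : H₁ → H₂ with ‖f − h‖ < (ε/κ)·‖f‖. -/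
open Matrix

/-- `(S, κ)` is a Kazhdan pair for `Γ`: every (finite-dimensional) unitary
representation of `Γ` with an `(S, κ)`-invariant vector has a nonzero
invariant vector. -/
def IsKazhdanPair (Γ : Type*) [Group Γ] (S : Set Γ) (κ : ℝ) : Prop :=
  ∀ (n : ℕ)
    (ρ : Γ →* (EuclideanSpace ℂ (Fin n) ≃ₗᵢ[ℂ] EuclideanSpace ℂ (Fin n)))
    (v : EuclideanSpace ℂ (Fin n)), v ≠ 0 →
    (∀ s ∈ S, ‖ρ s v - v‖ < κ * ‖v‖) →
    ∃ w : EuclideanSpace ℂ (Fin n), w ≠ 0 ∧ ∀ γ : Γ, ρ γ w = w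

noncomputable def matE (m n : Type*) [Fintype m] [Fintype n] :
    Matrix m n ℂ ≃ₗ[ℂ] EuclideanSpace ℂ (m × n) where
  toFun M := WithLp.toLp 2 (fun p => M p.1 p.2)
  invFun x := Matrix.of fun i j => x (i, j)
  map_add' := by intros; rfl
  map_smul' := by intros; rfl
  left_inv := fun M => rfl
  right_inv := fun x => rfl

lemma norm_matE {m n : Type*} [Fintype m] [Fintype n] (M : Matrix m n ℂ) :
    ‖matE m n M‖ = frobNorm M := by
  rw [EuclideanSpace.norm_eq, frobNorm]
  congr 1
  rw [Matrix.trace, Fintype.sum_prod_type]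
  simp only [Matrix.diag, Matrix.mul_apply, Matrix.conjTranspose_apply, Complex.re_sum]
  rw [Finset.sum_comm]
  congr 1
  ext i
  congr 1
  ext j
  have : star (M j i) * M j i = (Complex.normSq (M j i) : ℂ) := by
    rw [mul_comm]; exact Complex.mul_conj _
  rw [this]
  simp [Complex.normSq_eq_norm_sq, matE, sq]
  rfl

lemma frobNorm_unitary {m n : Type*} [Fintype m] [Fintype n] [DecidableEq m] [DecidableEq n]
    (A : Matrix m m ℂ) (B : Matrix n n ℂ) (hA : Aᴴ * A = 1) (hB : B * Bᴴ = 1)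
    (M : Matrix m n ℂ) : frobNorm (A * M * B) = frobNorm M := by
  unfold frobNorm
  congr 2
  have : (A * M * B)ᴴ * (A * M * B) = Bᴴ * (Mᴴ * M) * B := by
    simp only [Matrix.conjTranspose_mul]
    simp only [Matrix.mul_assoc]
    rw [show Aᴴ * (A * (M * B)) = (Aᴴ * A) * (M * B) by rw [Matrix.mul_assoc], hA,
      Matrix.one_mul]
  rw [this, Matrix.trace_mul_cycle, ← Matrix.mul_assoc, hB, Matrix.one_mul]

variable {n₁ n₂ : ℕ}

/-- Conjugation `M ↦ A M B*` as a linear equivalence of matrix space. -/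
noncomputable def conjLin (A : Matrix.unitaryGroup (Fin n₂) ℂ)
    (B : Matrix.unitaryGroup (Fin n₁) ℂ) :
    Matrix (Fin n₂) (Fin n₁) ℂ ≃ₗ[ℂ] Matrix (Fin n₂) (Fin n₁) ℂ where
  toFun M := A.1 * M * star B.1
  invFun M := star A.1 * M * B.1
  map_add' := by intros; simp [Matrix.mul_add, Matrix.add_mul]
  map_smul' := by intros; simp [Matrix.mul_smul, Matrix.smul_mul]
  left_inv M := by
    simp only [Matrix.mul_assoc]
    rw [show A.1 * (M * (star B.1 * B.1)) = A.1 * (M * (star B.1 * B.1)) from rfl,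
      B.2.1, Matrix.mul_one, ← Matrix.mul_assoc, A.2.1, Matrix.one_mul]
  right_inv M := by
    simp only [Matrix.mul_assoc]
    rw [show B.1 * star B.1 = 1 from B.2.2, Matrix.mul_one, ← Matrix.mul_assoc,
      show A.1 * star A.1 = 1 from A.2.2, Matrix.one_mul]

/-- The conjugation unitary representation on matrix space, transported to
Euclidean space. -/
noncomputable def conjRho {Γ : Type*} [Group Γ]
    (α : Γ →* Matrix.unitaryGroup (Fin n₂) ℂ) (β : Γ →* Matrix.unitaryGroup (Fin n₁) ℂ) :
    Γ →* (EuclideanSpace ℂ (Fin n₂ × Fin n₁) ≃ₗᵢ[ℂ] EuclideanSpace ℂ (Fin n₂ × Fin n₁)) :=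
  MonoidHom.mk' (fun γ =>
    { toLinearEquiv := (matE _ _).symm ≪≫ₗ conjLin (α γ) (β γ) ≪≫ₗ matE _ _
      norm_map' := by
        intro x
        show ‖matE _ _ (conjLin (α γ) (β γ) ((matE _ _).symm x))‖ = ‖x‖
        rw [norm_matE]
        show frobNorm ((α γ).1 * ((matE _ _).symm x) * star (β γ).1) = _
        rw [frobNorm_unitary _ _ (by rw [← Matrix.star_eq_conjTranspose]; exact (α γ).2.1)
          (by rw [← Matrix.star_eq_conjTranspose, star_star]; exact (β γ).2.1),
          ← norm_matE, LinearEquiv.apply_symm_apply] })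
    (by
      intro γ δ
      refine LinearIsometryEquiv.ext fun x => ?_
      show matE _ _ (conjLin (α (γ * δ)) (β (γ * δ)) ((matE _ _).symm x)) =
        matE _ _ (conjLin (α γ) (β γ) ((matE _ _).symm
          (matE _ _ (conjLin (α δ) (β δ) ((matE _ _).symm x)))))
      rw [LinearEquiv.symm_apply_apply]
      congr 1
      set M := (matE (Fin n₂) (Fin n₁)).symm x with hM
      show (α (γ * δ)).1 * M * star (β (γ * δ)).1 =
        (α γ).1 * ((α δ).1 * M * star (β δ).1) * star (β γ).1
      rw [_root_.map_mul α, _root_.map_mul β, Matrix.UnitaryGroup.mul_val, Matrix.UnitaryGroup.mul_val]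
      simp [Matrix.mul_assoc, Matrix.star_mul])

section Inv

variable {Γ : Type*} [Group Γ] {E : Type*} [NormedAddCommGroup E] [InnerProductSpace ℂ E]

/-- The subspace of `Γ`-invariant vectors. -/
def invSub (ρ : Γ →* (E ≃ₗᵢ[ℂ] E)) : Submodule ℂ E where
  carrier := {x | ∀ γ, ρ γ x = x}
  add_mem' := by intro a b ha hb γ; simp [map_add, ha γ, hb γ]
  zero_mem' := by intro γ; simp
  smul_mem' := by intro c a ha γ; simp [_root_.map_smul, ha γ]

lemma rho_inv_apply (ρ : Γ →* (E ≃ₗᵢ[ℂ] E)) (γ : Γ) (x : E) :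
    ρ γ⁻¹ (ρ γ x) = x := by
  rw [show ρ γ⁻¹ (ρ γ x) = (ρ γ⁻¹ * ρ γ) x from rfl, ← _root_.map_mul, inv_mul_cancel, _root_.map_one]
  rfl

lemma rho_apply_inv (ρ : Γ →* (E ≃ₗᵢ[ℂ] E)) (γ : Γ) (x : E) :
    ρ γ (ρ γ⁻¹ x) = x := by
  rw [show ρ γ (ρ γ⁻¹ x) = (ρ γ * ρ γ⁻¹) x from rfl, ← _root_.map_mul, mul_inv_cancel, _root_.map_one]
  rfl

lemma orth_invariant (ρ : Γ →* (E ≃ₗᵢ[ℂ] E)) (γ : Γ) {y : E}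
    (hy : y ∈ (invSub ρ)ᗮ) : ρ γ y ∈ (invSub ρ)ᗮ := by
  rw [Submodule.mem_orthogonal] at hy ⊢
  intro x hx
  have h1 : ρ γ x = x := hx γ
  calc inner ℂ x (ρ γ y) = inner ℂ (ρ γ x) (ρ γ y) := by rw [h1]
    _ = (inner ℂ x y : ℂ) := (ρ γ).inner_map_map x y
    _ = 0 := hy x hx

/-- Restriction of the representation to the orthogonal complement of the
invariant subspace. -/
noncomputable def restRho (ρ : Γ →* (E ≃ₗᵢ[ℂ] E)) :
    Γ →* (((invSub ρ)ᗮ : Submodule ℂ E) ≃ₗᵢ[ℂ] ((invSub ρ)ᗮ : Submodule ℂ E)) :=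
  MonoidHom.mk' (fun γ =>
    { toFun := fun x => ⟨ρ γ x, orth_invariant ρ γ x.2⟩
      invFun := fun x => ⟨ρ γ⁻¹ x, orth_invariant ρ γ⁻¹ x.2⟩
      left_inv := fun x => by ext; exact rho_inv_apply ρ γ x
      right_inv := fun x => by ext; exact rho_apply_inv ρ γ x
      map_add' := fun x y => by ext; exact map_add _ _ _
      map_smul' := fun c x => by ext; exact _root_.map_smul (ρ γ) c x.1
      norm_map' := fun x => (ρ γ).norm_map x })
    (by
      intro γ δ
      refine LinearIsometryEquiv.ext fun x => ?_
      ext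
      show ρ (γ * δ) x = ρ γ (ρ δ x)
      rw [_root_.map_mul]; rfl)

end Inv

set_option maxHeartbeats 2000000 in
/-- If `Γ` has Property (T) with Kazhdan constant `κ > 0` for the generating
set `S`, `(H₁, β)` and `(H₂, α)` are finite-dimensional unitary
representations, and `f : H₁ → H₂` is a nonzero linear map with
`‖α(s⁻¹) ∘ f ∘ β(s) − f‖ < ε‖f‖` for each `s ∈ S`, then there is a morphism
of `Γ`-representations `h : H₁ → H₂` with `‖f − h‖ < (ε/κ)‖f‖`. -/
theorem stmt14 (Γ : Type*) [Group Γ] (S : Set Γ)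
    (hgen : Subgroup.closure S = ⊤)
    (κ : ℝ) (hκ : 0 < κ) (hKP : IsKazhdanPair Γ S κ)
    (ε : ℝ) (hε : 0 < ε)
    (n₁ n₂ : ℕ)
    (β : Γ →* Matrix.unitaryGroup (Fin n₁) ℂ)
    (α : Γ →* Matrix.unitaryGroup (Fin n₂) ℂ)
    (f : Matrix (Fin n₂) (Fin n₁) ℂ) (hf : f ≠ 0)
    (halmost : ∀ s ∈ S,
      frobNorm ((α s⁻¹ : Matrix (Fin n₂) (Fin n₂) ℂ) * f *
          (β s : Matrix (Fin n₁) (Fin n₁) ℂ) - f) < ε * frobNorm f) :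
    ∃ h : Matrix (Fin n₂) (Fin n₁) ℂ,
      (∀ γ : Γ, (α γ : Matrix (Fin n₂) (Fin n₂) ℂ) * h =
        h * (β γ : Matrix (Fin n₁) (Fin n₁) ℂ)) ∧
      frobNorm (f - h) < (ε / κ) * frobNorm f := by
  classical
  set ρ := conjRho α β with hρ
  set V := invSub ρ with hV
  set v : EuclideanSpace ℂ (Fin n₂ × Fin n₁) := matE _ _ f with hv
  have hv0 : v ≠ 0 := by
    intro h0
    rw [hv] at h0
    exact hf ((LinearEquiv.map_eq_zero_iff _).mp h0)
  have hvnorm : ‖v‖ = frobNorm f := norm_matE f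
  have hfpos : 0 < frobNorm f := by
    rw [← hvnorm]; exact norm_pos_iff.mpr hv0
  set p : EuclideanSpace ℂ (Fin n₂ × Fin n₁) := ((V.orthogonalProjectionOnto v : V) : EuclideanSpace ℂ (Fin n₂ × Fin n₁)) with hp
  have hpV : p ∈ V := (V.orthogonalProjectionOnto v : V).2
  set w : EuclideanSpace ℂ (Fin n₂ × Fin n₁) := v - p with hw
  have hwV : w ∈ Vᗮ := V.sub_starProjection_mem_orthogonal v
  set h : Matrix (Fin n₂) (Fin n₁) ℂ := (matE (Fin n₂) (Fin n₁)).symm p with hh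
  have key : (∀ γ : Γ, ρ γ p = p) := hpV
  have hrho_apply : ∀ (γ : Γ) (M : Matrix (Fin n₂) (Fin n₁) ℂ),
      ρ γ (matE _ _ M) = matE _ _ ((α γ).1 * M * star (β γ).1) := by
    intro γ M
    show matE _ _ (conjLin (α γ) (β γ) ((matE _ _).symm (matE _ _ M))) = _
    rw [LinearEquiv.symm_apply_apply]
    rfl
  have hnormbound : ‖w‖ < (ε / κ) * frobNorm f := by
    by_cases hw0 : w = 0
    · rw [hw0, norm_zero]
      positivity
    · -- restrict to Vᗮ and apply the Kazhdan pair hypothesis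
      set K : Submodule ℂ (EuclideanSpace ℂ (Fin n₂ × Fin n₁)) := Vᗮ with hK
      set B := stdOrthonormalBasis ℂ K with hB
      set τ := restRho ρ with hτ
      set σ : Γ →* (EuclideanSpace ℂ (Fin (Module.finrank ℂ K)) ≃ₗᵢ[ℂ]
          EuclideanSpace ℂ (Fin (Module.finrank ℂ K))) :=
        MonoidHom.mk' (fun γ => (B.repr.symm.trans (τ γ)).trans B.repr)
          (by
            intro γ δ
            refine LinearIsometryEquiv.ext fun x => ?_
            show B.repr (τ (γ * δ) (B.repr.symm x)) =
              B.repr (τ γ (B.repr.symm (B.repr (τ δ (B.repr.symm x)))))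
            rw [LinearIsometryEquiv.symm_apply_apply, _root_.map_mul]
            rfl) with hσ
      have hno : ¬ ∃ u : EuclideanSpace ℂ (Fin (Module.finrank ℂ K)),
          u ≠ 0 ∧ ∀ γ : Γ, σ γ u = u := by
        rintro ⟨u, hu0, hu⟩
        set u' : K := B.repr.symm u with hu'
        have hu'inv : ∀ γ, τ γ u' = u' := by
          intro γ
          have h1 : σ γ u = B.repr (τ γ (B.repr.symm u)) := rfl
          have h2 := (h1.symm.trans (hu γ))
          have h3 := congrArg B.repr.symm h2
          rwa [LinearIsometryEquiv.symm_apply_apply] at h3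
        have hmemV : (u' : EuclideanSpace ℂ (Fin n₂ × Fin n₁)) ∈ V := by
          intro γ
          have := congrArg (Subtype.val) (hu'inv γ)
          exact this
        have hmemK : (u' : EuclideanSpace ℂ (Fin n₂ × Fin n₁)) ∈ K := u'.2
        have : (u' : EuclideanSpace ℂ (Fin n₂ × Fin n₁)) = 0 := by
          have := (Submodule.mem_orthogonal V _).mp hmemK _ hmemV
          exact inner_self_eq_zero.mp this
        apply hu0
        have : u' = 0 := Subtype.ext this
        rw [hu'] at this
        simpa using congrArg B.repr this
      set x : EuclideanSpace ℂ (Fin (Module.finrank ℂ K)) := B.repr ⟨w, hwV⟩ with hx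
      have hx0 : x ≠ 0 := by
        intro h0
        apply hw0
        have := congrArg B.repr.symm h0
        rw [LinearIsometryEquiv.symm_apply_apply] at this
        simpa using congrArg Subtype.val this
      have hxnorm : ‖x‖ = ‖w‖ := B.repr.norm_map _
      obtain ⟨s, hs, hbig⟩ : ∃ s ∈ S, ¬ ‖σ s x - x‖ < κ * ‖x‖ := by
        by_contra hcon
        push_neg at hcon
        exact hno (hKP _ σ x hx0 hcon)
      push_neg at hbig
      -- ‖σ s x - x‖ = ‖ρ s w - w‖
      have e1 : ‖σ s x - x‖ = ‖ρ s w - w‖ := by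
        have : σ s x - x = B.repr (τ s ⟨w, hwV⟩ - ⟨w, hwV⟩) := by
          rw [map_sub]
          show B.repr (τ s (B.repr.symm (B.repr ⟨w, hwV⟩))) - B.repr ⟨w, hwV⟩ = _
          rw [LinearIsometryEquiv.symm_apply_apply]
        rw [this, B.repr.norm_map]
        rfl
      have e2 : ‖ρ s w - w‖ = ‖ρ s⁻¹ w - w‖ := by
        calc ‖ρ s w - w‖ = ‖ρ s⁻¹ (ρ s w - w)‖ := ((ρ s⁻¹).norm_map _).symm
          _ = ‖w - ρ s⁻¹ w‖ := by rw [map_sub, rho_inv_apply]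
          _ = ‖ρ s⁻¹ w - w‖ := norm_sub_rev _ _
      have e3 : ρ s⁻¹ w - w = ρ s⁻¹ v - v := by
        rw [hw, map_sub, key s⁻¹]
        abel
      have e4 : ρ s⁻¹ v = matE _ _ ((α s⁻¹).1 * f * (β s).1) := by
        rw [hv, hrho_apply]
        congr 1
        rw [show (β s⁻¹) = (β s)⁻¹ from _root_.map_inv β s, Matrix.UnitaryGroup.inv_val,
          star_star]
      have e5 : ‖ρ s⁻¹ v - v‖ = frobNorm ((α s⁻¹).1 * f * (β s).1 - f) := by
        rw [e4, hv, ← map_sub, norm_matE]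
      have hlt : κ * ‖w‖ < ε * frobNorm f := by
        calc κ * ‖w‖ = κ * ‖x‖ := by rw [hxnorm]
          _ ≤ ‖σ s x - x‖ := hbig
          _ = ‖ρ s⁻¹ v - v‖ := by rw [e1, e2, e3]
          _ = frobNorm ((α s⁻¹).1 * f * (β s).1 - f) := e5
          _ < ε * frobNorm f := halmost s hs
      rw [div_mul_eq_mul_div, lt_div_iff₀ hκ]
      calc ‖w‖ * κ = κ * ‖w‖ := mul_comm _ _
        _ < ε * frobNorm f := hlt
  refine ⟨h, ?_, ?_⟩
  · intro γ
    have hinv := key γ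
    rw [hp] at hinv
    have : (α γ).1 * h * star (β γ).1 = h := by
      have h1 := hrho_apply γ h
      rw [hh, LinearEquiv.apply_symm_apply] at h1
      have h2 := congrArg (matE (Fin n₂) (Fin n₁)).symm (h1.symm.trans hinv)
      rwa [LinearEquiv.symm_apply_apply, ← hh] at h2
    calc (α γ).1 * h = (α γ).1 * h * (star (β γ).1 * (β γ).1) := by
          rw [(β γ).2.1, Matrix.mul_one]
      _ = ((α γ).1 * h * star (β γ).1) * (β γ).1 := by simp only [Matrix.mul_assoc]
      _ = h * (β γ).1 := by rw [this]
  · have : f - h = (matE (Fin n₂) (Fin n₁)).symm w := by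
      have h1 : (matE (Fin n₂) (Fin n₁)) (f - h) = w := by
        rw [map_sub, hw, hh, LinearEquiv.apply_symm_apply, ← hv]
      rw [← h1, LinearEquiv.symm_apply_apply]
    rw [this, ← norm_matE, LinearEquiv.apply_symm_apply]
    exact hnormbound
end
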